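/- arXiv:2408.16741 — 2 statements merged into one kernel-verified Lean document; each statement's English description precedes it below -/
import Mathlib

section
/- Let D ∈ M_{k×l}(ℝ) be an irregular matrix (non-branching, with every row containing exactly two or zero non-zero entries, and non-orientable) with no zero rows and no zero columns. If the column graph of D is connected, then D has full column rank, i.e., the columns of D are linearly independent over ℝ. -/
open scoped Classical

/-- A real matrix is *non-branching* if all its entries lie in `{-1, 0, 1}` and every
row has at most two non-zero entries. -/
def NonBranching {k l : ℕ} (D : Matrix (Fin k) (Fin l) ℝ) : Prop :=
  (∀ i j, D i j = -1 ∨ D i j = 0 ∨ D i j = 1) ∧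
    ∀ i : Fin k, (Finset.univ.filter fun j => D i j ≠ 0).card ≤ 2

/-- The `j`-th column of a matrix, as a vector. -/
def col {k l : ℕ} (M : Matrix (Fin k) (Fin l) ℝ) (j : Fin l) : Fin k → ℝ :=
  fun i => M i j

/-- A matrix is *oriented* if each of its rows contains at most one entry equal to `1`
and at most one entry equal to `-1`. -/
def Oriented {k l : ℕ} (M : Matrix (Fin k) (Fin l) ℝ) : Prop :=
  ∀ i : Fin k, (Finset.univ.filter fun j => M i j = 1).card ≤ 1 ∧
    (Finset.univ.filter fun j => M i j = -1).card ≤ 1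

/-- The *column graph* of a matrix `D`: the simple graph on the column indices in which
two distinct columns are adjacent iff some row has a non-zero entry in both columns. -/
def columnGraph {k l : ℕ} (D : Matrix (Fin k) (Fin l) ℝ) : SimpleGraph (Fin l) where
  Adj j₁ j₂ := j₁ ≠ j₂ ∧ ∃ i : Fin k, D i j₁ ≠ 0 ∧ D i j₂ ≠ 0
  symm := by
    constructor
    intro a b h
    exact ⟨h.1.symm, h.2.imp fun i hi => ⟨hi.2, hi.1⟩⟩
  loopless := by
    constructor
    intro a h
    exact h.1 rfl

/-! A kernel vector `c` of `D` has `|c j₁| = |c j₂|` whenever columns `j₁, j₂` share a row,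
because that row reads `± c j₁ ± c j₂ = 0`. If the column graph is connected, `|c|` is
therefore a constant `t`, and if `c ≠ 0` the signs `ε = c / t` lie in the kernel too. Then every
row of `D · diag ε` has at most two non-zero entries and sum `0`, so no non-zero value occurs
twice in it: `D` would be orientable. -/

open scoped Matrix

theorem SimpleGraph.Reachable.apply_eq_of_forall_adj {V β : Type*} {G : SimpleGraph V}
    (f : V → β) (hf : ∀ u v, G.Adj u v → f u = f v) {u v : V} (h : G.Reachable u v) :
    f u = f v := by
  obtain ⟨p⟩ := h
  induction p with
  | nil => rfl
  | cons hadj _ ih => exact (hf _ _ hadj).trans ih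

section Rows

variable {ι : Type*} [Fintype ι]

theorem eq_or_eq_of_card_filter_le_two {p : ι → Prop} [DecidablePred p]
    (h : (Finset.univ.filter p).card ≤ 2) {x y z : ι} (hxy : x ≠ y) (hx : p x) (hy : p y)
    (hz : p z) : z = x ∨ z = y := by
  by_contra! hne
  have : 2 < (Finset.univ.filter p).card :=
    Finset.two_lt_card.mpr ⟨x, by simpa, y, by simpa, z, by simpa, hxy, hne.1.symm, hne.2.symm⟩
  omega

theorem sum_mul_eq_add_of_card_support_le_two {r : ι → ℝ}
    (h : (Finset.univ.filter fun j => r j ≠ 0).card ≤ 2) {x y : ι} (hxy : x ≠ y)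
    (hx : r x ≠ 0) (hy : r y ≠ 0) (c : ι → ℝ) : ∑ j, r j * c j = r x * c x + r y * c y :=
  Fintype.sum_eq_add (f := fun j => r j * c j) x y hxy fun z hz => by
    by_contra hrz
    rcases eq_or_eq_of_card_filter_le_two h hxy hx hy (left_ne_zero_of_mul hrz) with rfl | rfl
    exacts [hz.1 rfl, hz.2 rfl]

theorem card_filter_eq_le_one_of_sum_eq_zero {r : ι → ℝ}
    (h : (Finset.univ.filter fun j => r j ≠ 0).card ≤ 2) (hsum : ∑ j, r j = 0)
    {s : ℝ} (hs : s ≠ 0) : (Finset.univ.filter fun j => r j = s).card ≤ 1 := by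
  refine Finset.card_le_one.mpr fun x hx y hy => ?_
  simp only [Finset.mem_filter, Finset.mem_univ, true_and] at hx hy
  by_contra hxy
  have := sum_mul_eq_add_of_card_support_le_two h hxy (hx ▸ hs) (hy ▸ hs) 1
  simp only [Pi.one_apply, mul_one] at this
  rw [hsum, hx, hy] at this
  exact hs (by linarith)

end Rows

theorem oriented_of_sum_eq_zero {k l : ℕ} {M : Matrix (Fin k) (Fin l) ℝ}
    (h : ∀ i, (Finset.univ.filter fun j => M i j ≠ 0).card ≤ 2) (hsum : ∀ i, ∑ j, M i j = 0) :
    Oriented M := fun i =>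
  ⟨card_filter_eq_le_one_of_sum_eq_zero (h i) (hsum i) one_ne_zero,
    card_filter_eq_le_one_of_sum_eq_zero (h i) (hsum i) (neg_ne_zero.mpr one_ne_zero)⟩

namespace NonBranching

variable {k l : ℕ} {D : Matrix (Fin k) (Fin l) ℝ}

theorem abs_eq_one (hD : NonBranching D) {i : Fin k} {j : Fin l} (h : D i j ≠ 0) :
    |D i j| = 1 := by
  rcases hD.1 i j with h1 | h1 | h1 <;> simp_all

theorem abs_eq_abs_of_adj (hD : NonBranching D) {c : Fin l → ℝ} (hc : D *ᵥ c = 0)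
    {j₁ j₂ : Fin l} (hadj : (columnGraph D).Adj j₁ j₂) : |c j₁| = |c j₂| := by
  obtain ⟨hne, i, h₁, h₂⟩ := hadj
  have hrow : D i j₁ * c j₁ + D i j₂ * c j₂ = 0 := by
    have hsum : ∑ j, D i j * c j = 0 := by simpa [Matrix.mulVec, dotProduct] using congrFun hc i
    rwa [sum_mul_eq_add_of_card_support_le_two (hD.2 i) hne h₁ h₂] at hsum
  have := congrArg abs (eq_neg_of_add_eq_zero_left hrow)
  rwa [abs_neg, abs_mul, abs_mul, hD.abs_eq_one h₁, hD.abs_eq_one h₂, one_mul, one_mul] at this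

theorem oriented_mul_diagonal_of_mulVec_eq_zero (hD : NonBranching D) {ε : Fin l → ℝ}
    (hε : ∀ j, ε j = 1 ∨ ε j = -1) (hker : D *ᵥ ε = 0) :
    Oriented (D * Matrix.diagonal ε) := by
  have hε0 : ∀ j, ε j ≠ 0 := fun j => by rcases hε j with h | h <;> simp [h]
  refine oriented_of_sum_eq_zero (fun i => ?_) (fun i => ?_)
  · simpa only [Matrix.mul_diagonal, mul_ne_zero_iff, hε0, ne_eq, not_false_eq_true, and_true]
      using hD.2 i
  · simpa [Matrix.mulVec, dotProduct] using congrFun hker i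

end NonBranching

theorem stmt6_general {k l : ℕ} (D : Matrix (Fin k) (Fin l) ℝ)
    (hD : NonBranching D)
    (hnonor : ¬ ∃ ε : Fin l → ℝ, (∀ j, ε j = 1 ∨ ε j = -1) ∧
      Oriented (D * Matrix.diagonal ε))
    (hconn : (columnGraph D).Connected) :
    LinearIndependent ℝ (fun j : Fin l => col D j) := by
  rw [Fintype.linearIndependent_iff]
  intro c hc
  have hker : D *ᵥ c = 0 := by
    simpa [funext_iff, col, Finset.sum_apply, Matrix.mulVec, dotProduct, mul_comm] using hc
  by_contra! hne
  obtain ⟨j₀, hj₀⟩ := hne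
  have habs : ∀ j, |c j| = |c j₀| := fun j =>
    (hconn.preconnected j j₀).apply_eq_of_forall_adj (|c ·|)
      fun _ _ => hD.abs_eq_abs_of_adj hker
  have ht : 0 < |c j₀| := abs_pos.mpr hj₀
  have hsign : ∀ j, (|c j₀|⁻¹ • c) j = 1 ∨ (|c j₀|⁻¹ • c) j = -1 := fun j => by
    rcases (abs_eq ht.le).mp (habs j) with h | h <;> simp [h, ht.ne']
  exact hnonor ⟨_, hsign, hD.oriented_mul_diagonal_of_mulVec_eq_zero hsign
    (by rw [Matrix.mulVec_smul, hker, smul_zero])⟩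

/-- An irregular matrix (non-branching, each row with exactly two or zero
non-zero entries, non-orientable) with no zero rows and no zero columns whose column graph is
connected has linearly independent columns. -/
theorem stmt6 {k l : ℕ} (D : Matrix (Fin k) (Fin l) ℝ)
    (hD : NonBranching D)
    (hrow2 : ∀ i : Fin k, (Finset.univ.filter fun j => D i j ≠ 0).card = 2 ∨
      (Finset.univ.filter fun j => D i j ≠ 0).card = 0)
    (hnonor : ¬ ∃ ε : Fin l → ℝ, (∀ j, ε j = 1 ∨ ε j = -1) ∧
      Oriented (D * Matrix.diagonal ε))
    (hrows : ∀ i : Fin k, (fun j => D i j) ≠ 0)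
    (hcols : ∀ j, col D j ≠ 0)
    (hconn : (columnGraph D).Connected) :
    LinearIndependent ℝ (fun j : Fin l => col D j) :=
  stmt6_general D hD hnonor hconn
end

section
/- Let D ∈ M_{k×l}(ℝ) be a non-branching matrix with no zero columns. Call a connected component C of the column graph of D regulable if the submatrix of D consisting of the columns indexed by C has no row with exactly one non-zero entry and is orientable; let C₁,…,C_r be the regulable components and let mᵢ denote the largest column index in Cᵢ. Then there exists a diagonal matrix E with diagonal entries in {−1,1} such that the submatrix of D·E on the columns Cᵢ is oriented for each 1 ≤ i ≤ r, and, defining U ∈ M_{l×l}(ℝ) by U(j,j) = 1 for all j, U(j,mᵢ) = 1 for all j ∈ Cᵢ and each i, and all other entries 0, the factorization R = D·(E·U) is a weak column reduction of D; moreover, the i-th column of R is the zero vector if and only if i ∈ {m₁,…,m_r}. -/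
open scoped Classical

/-- The number of non-zero entries of the `j`-th column (the cardinality of its support). -/
noncomputable def suppCard {k l : ℕ} (M : Matrix (Fin k) (Fin l) ℝ) (j : Fin l) : ℕ :=
  (Finset.univ.filter fun i => M i j ≠ 0).card

/-- `R = D * V` is a *weak column reduction* of `D`:
`V` is upper-triangular with entries in `{-1,0,1}` and diagonal entries in `{-1,1}`,
the non-zero columns of `R` are linearly independent, the supports of the columns of `V`
with more than one non-zero entry are pairwise disjoint, and the `i`-th column of `V` has
more than one non-zero entry iff the `i`-th column of `R` is zero. -/
def WeakColumnReduction {k l : ℕ} (D R : Matrix (Fin k) (Fin l) ℝ)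
    (V : Matrix (Fin l) (Fin l) ℝ) : Prop :=
  R = D * V ∧
  (∀ i j : Fin l, j < i → V i j = 0) ∧
  (∀ i j : Fin l, V i j = -1 ∨ V i j = 0 ∨ V i j = 1) ∧
  (∀ i : Fin l, V i i = -1 ∨ V i i = 1) ∧
  (LinearIndependent ℝ fun j : {j : Fin l // col R j ≠ 0} => col R j.1) ∧
  (∀ j₁ j₂ : Fin l, j₁ ≠ j₂ → 1 < suppCard V j₁ → 1 < suppCard V j₂ →
    Disjoint (Finset.univ.filter fun i => V i j₁ ≠ 0)
      (Finset.univ.filter fun i => V i j₂ ≠ 0)) ∧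
  (∀ j : Fin l, 1 < suppCard V j ↔ col R j = 0)


/-- The connected component of `j` in the column graph of `D` is *regulable*: the submatrix
of `D` on the columns of the component has no row with exactly one non-zero entry, and it is
orientable (the columns can be sign-flipped so every row of the submatrix contains at most
one `1` and at most one `-1`). -/
def RegulableComp {k l : ℕ} (D : Matrix (Fin k) (Fin l) ℝ) (j : Fin l) : Prop :=
  (∀ i : Fin k, (Finset.univ.filter fun j' =>
      (columnGraph D).Reachable j j' ∧ D i j' ≠ 0).card ≠ 1) ∧
  ∃ ε : Fin l → ℝ, (∀ j', ε j' = 1 ∨ ε j' = -1) ∧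
    ∀ i : Fin k,
      (Finset.univ.filter fun j' => (columnGraph D).Reachable j j' ∧
        D i j' * ε j' = 1).card ≤ 1 ∧
      (Finset.univ.filter fun j' => (columnGraph D).Reachable j j' ∧
        D i j' * ε j' = -1).card ≤ 1

/-!
In a regulable component every row has zero or two non-zero entries, and once the component is
oriented two such entries are a `1` and a `-1`; so the sum of its signed columns, which is the
column `mᵢ` of `R`, vanishes, while every other column of `R` is a signed column of `D`. For the
independence of the latter: along each row of a non-branching `D` a kernel vector `x` satisfies
`D i j * x j + D i j' * x j' = 0`, so `x` is non-zero on whole components of the column graph,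
and a component where it is non-zero is regulable, oriented by the signs of `x`. As `x`
vanishes at the omitted columns `mᵢ`, it vanishes everywhere.
-/

open Finset
open scoped Matrix

theorem Finset.sum_eq_zero_of_oriented {ι : Type*} (s : Finset ι) (f : ι → ℝ)
    (hf : ∀ x ∈ s, f x = -1 ∨ f x = 0 ∨ f x = 1) (hpos : #(s.filter (f · = 1)) ≤ 1)
    (hneg : #(s.filter (f · = -1)) ≤ 1) (hne : #(s.filter (f · ≠ 0)) ≠ 1) :
    ∑ x ∈ s, f x = 0 := by
  have hcard : #(s.filter (f · ≠ 0)) = #(s.filter (f · = 1)) + #(s.filter (f · = -1)) := by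
    simp only [card_filter, ← sum_add_distrib]
    refine sum_congr rfl fun x hx => ?_
    rcases hf x hx with h | h | h <;> norm_num [h]
  have hsum : ∑ x ∈ s, f x = #(s.filter (f · = 1)) - #(s.filter (f · = -1)) := by
    simp only [← sum_boole, ← sum_sub_distrib]
    refine sum_congr rfl fun x hx => ?_
    rcases hf x hx with h | h | h <;> norm_num [h]
  have hbal : #(s.filter (f · = 1)) = #(s.filter (f · = -1)) := by omega
  rw [hsum, hbal, sub_self]

theorem SimpleGraph.Reachable.reachable_eq {V : Type*} {G : SimpleGraph V} {u v : V}
    (h : G.Reachable u v) : G.Reachable u = G.Reachable v :=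
  funext fun _ => propext ⟨h.symm.trans, h.trans⟩

variable {k l : ℕ} {D : Matrix (Fin k) (Fin l) ℝ}

theorem columnGraph_reachable_of_ne_zero {i : Fin k} {j j' : Fin l} (hj : D i j ≠ 0)
    (hj' : D i j' ≠ 0) : (columnGraph D).Reachable j j' := by
  obtain rfl | hne := eq_or_ne j j'
  · rfl
  · exact SimpleGraph.Adj.reachable ⟨hne, i, hj, hj'⟩

theorem regulableComp_congr {j j' : Fin l} (h : (columnGraph D).Reachable j j') :
    RegulableComp D j ↔ RegulableComp D j' := by
  simp only [RegulableComp, h.reachable_eq]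

namespace NonBranching

variable {x : Fin l → ℝ}

theorem filter_ne_zero_eq_pair (hD : NonBranching D) {i : Fin k} {j j' : Fin l} (hjj' : j ≠ j')
    (hj : D i j ≠ 0) (hj' : D i j' ≠ 0) : univ.filter (fun m => D i m ≠ 0) = {j, j'} :=
  (eq_of_subset_of_card_le (by simp [insert_subset_iff, hj, hj'])
    (by rw [card_pair hjj']; exact hD.2 i)).symm

theorem mul_add_mul_eq_zero_of_mulVec_eq_zero (hD : NonBranching D) (hx : D *ᵥ x = 0)
    {i : Fin k} {j j' : Fin l} (hjj' : j ≠ j') (hj : D i j ≠ 0) (hj' : D i j' ≠ 0) :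
    D i j * x j + D i j' * x j' = 0 := by
  rw [← sum_pair (f := fun m => D i m * x m) hjj', ← hD.filter_ne_zero_eq_pair hjj' hj hj',
    sum_filter_of_ne fun _ _ h => left_ne_zero_of_mul h]
  exact congrFun hx i

theorem apply_ne_zero_of_adj (hD : NonBranching D) (hx : D *ᵥ x = 0)
    {j j' : Fin l} (h : (columnGraph D).Adj j j') (hj : x j ≠ 0) : x j' ≠ 0 := by
  obtain ⟨hne, i, hij, hij'⟩ := h
  intro hj'
  have := hD.mul_add_mul_eq_zero_of_mulVec_eq_zero hx hne hij hij'
  rw [hj', mul_zero, add_zero] at this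
  exact mul_ne_zero hij hj this

theorem apply_ne_zero_of_reachable (hD : NonBranching D) (hx : D *ᵥ x = 0)
    {j j' : Fin l} (h : (columnGraph D).Reachable j j') (hj : x j ≠ 0) : x j' ≠ 0 := by
  obtain ⟨w⟩ := h
  induction w with
  | nil => exact hj
  | cons hadj _ ih => exact ih (hD.apply_ne_zero_of_adj hx hadj hj)

theorem card_filter_reachable_ne_zero_ne_one (hD : NonBranching D)
    (hx : D *ᵥ x = 0) {j : Fin l} (hj : x j ≠ 0) (i : Fin k) :
    #(univ.filter fun m => (columnGraph D).Reachable j m ∧ D i m ≠ 0) ≠ 1 := by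
  intro hone
  obtain ⟨m, hm⟩ := card_eq_one.mp hone
  have hmem : m ∈ univ.filter fun m => (columnGraph D).Reachable j m ∧ D i m ≠ 0 := by
    rw [hm]; exact mem_singleton_self m
  obtain ⟨hjm, hDm⟩ := (mem_filter.mp hmem).2
  have hrow : univ.filter (fun m' => D i m' ≠ 0) = {m} := by
    rw [← hm]
    ext m'
    simp only [mem_filter, mem_univ, true_and]
    exact ⟨fun h' => ⟨hjm.trans (columnGraph_reachable_of_ne_zero hDm h'), h'⟩, And.right⟩
  have hrow_sum := congrFun hx i
  rw [Pi.zero_apply, Matrix.mulVec, dotProduct, ← sum_filter_of_ne (p := fun m' => D i m' ≠ 0)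
    fun _ _ h => left_ne_zero_of_mul h, hrow, sum_singleton] at hrow_sum
  exact mul_ne_zero hDm (hD.apply_ne_zero_of_reachable hx hjm hj) hrow_sum

theorem card_filter_reachable_mul_sign_le_one (hD : NonBranching D)
    (hx : D *ᵥ x = 0) {j : Fin l} (hj : x j ≠ 0) (i : Fin k) {s : ℝ} (hs : s ≠ 0) :
    #(univ.filter fun m => (columnGraph D).Reachable j m ∧
      D i m * (if 0 < x m then 1 else -1) = s) ≤ 1 := by
  set σ : Fin l → ℝ := fun m => if 0 < x m then 1 else -1
  have hσσ (m : Fin l) : σ m * σ m = 1 := by simp only [σ]; split_ifs <;> norm_num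
  have hσx (m : Fin l) : σ m * x m = |x m| := by
    simp only [σ]; split_ifs with h
    · rw [one_mul, abs_of_pos h]
    · rw [neg_one_mul, abs_of_nonpos (not_lt.mp h)]
  -- two columns of the filter contribute `s * |x m|` each to row `i`, so they cannot cancel
  have hval {m : Fin l} (hm : D i m * σ m = s) : D i m * x m = s * |x m| := by
    rw [← hm, ← hσx, mul_assoc, ← mul_assoc (σ m), hσσ, one_mul]
  refine card_le_one.mpr fun a ha b hb => by_contra fun hab => ?_
  simp only [mem_filter, mem_univ, true_and] at ha hb
  have hDa : D i a ≠ 0 := fun h => hs (by rw [← ha.2, h, zero_mul])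
  have hDb : D i b ≠ 0 := fun h => hs (by rw [← hb.2, h, zero_mul])
  have hrow := hD.mul_add_mul_eq_zero_of_mulVec_eq_zero hx hab hDa hDb
  rw [hval ha.2, hval hb.2, ← mul_add] at hrow
  have hxa : 0 < |x a| := abs_pos.mpr (hD.apply_ne_zero_of_reachable hx ha.1 hj)
  exact mul_ne_zero hs (by positivity) hrow

theorem regulableComp_of_mulVec_eq_zero (hD : NonBranching D)
    (hx : D *ᵥ x = 0) {j : Fin l} (hj : x j ≠ 0) : RegulableComp D j :=
  ⟨hD.card_filter_reachable_ne_zero_ne_one hx hj, fun m => if 0 < x m then 1 else -1,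
    fun m => by dsimp only; split_ifs <;> simp, fun i =>
      ⟨hD.card_filter_reachable_mul_sign_le_one hx hj i one_ne_zero,
        hD.card_filter_reachable_mul_sign_le_one hx hj i (by norm_num)⟩⟩

theorem eq_zero_of_mulVec_eq_zero (hD : NonBranching D) (hx : D *ᵥ x = 0)
    (h : ∀ j, RegulableComp D j → ∃ j', (columnGraph D).Reachable j j' ∧ x j' = 0) :
    x = 0 := by
  funext j
  by_contra hj
  obtain ⟨j', hjj', hj'⟩ := h j (hD.regulableComp_of_mulVec_eq_zero hx hj)
  exact hD.apply_ne_zero_of_reachable hx hjj' hj hj'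

theorem linearIndepOn_col (hD : NonBranching D) {s : Set (Fin l)}
    (hs : ∀ j, RegulableComp D j → ∃ j' ∉ s, (columnGraph D).Reachable j j') :
    LinearIndepOn ℝ (col D) s := by
  rw [linearIndepOn_iff]
  intro f hf hcomb
  have hker : D *ᵥ ⇑f = 0 := by
    rw [Finsupp.linearCombination_apply,
      Finsupp.sum_fintype f (fun i a => a • col D i) fun _ => zero_smul ℝ _] at hcomb
    ext i
    simpa [Matrix.mulVec, dotProduct, col, mul_comm] using congrFun hcomb i
  ext j
  refine congrFun (hD.eq_zero_of_mulVec_eq_zero hker fun j hj => ?_) j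
  obtain ⟨j', hj's, hjj'⟩ := hs j hj
  exact ⟨j', hjj', (Finsupp.mem_supported' _ _).mp hf j' hj's⟩

end NonBranching

def Orients (D : Matrix (Fin k) (Fin l) ℝ) (ε : Fin l → ℝ) (j : Fin l) : Prop :=
  ∀ i : Fin k,
    #(univ.filter fun m => (columnGraph D).Reachable j m ∧ D i m * ε m = 1) ≤ 1 ∧
    #(univ.filter fun m => (columnGraph D).Reachable j m ∧ D i m * ε m = -1) ≤ 1

theorem orients_congr {ε ε' : Fin l → ℝ} {j j' : Fin l}
    (hjj' : (columnGraph D).Reachable j j')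
    (hε : ∀ m, (columnGraph D).Reachable j m → ε m = ε' m) :
    Orients D ε j ↔ Orients D ε' j' := by
  have hfilter (i : Fin k) (s : ℝ) :
      univ.filter (fun m => (columnGraph D).Reachable j m ∧ D i m * ε m = s) =
        univ.filter fun m => (columnGraph D).Reachable j' m ∧ D i m * ε' m = s := by
    ext m
    simp only [mem_filter, mem_univ, true_and, ← hjj'.reachable_eq]
    exact and_congr_right fun hm => by rw [hε m hm]
  simp only [Orients, hfilter]

theorem RegulableComp.sum_mul_eq_zero (hD : NonBranching D) {j : Fin l} (h : RegulableComp D j)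
    {ε : Fin l → ℝ} (hε : ∀ m, ε m = 1 ∨ ε m = -1) (hor : Orients D ε j) (i : Fin k) :
    ∑ m ∈ univ.filter (fun m => (columnGraph D).Reachable j m), D i m * ε m = 0 := by
  have hne (m : Fin l) : D i m * ε m ≠ 0 ↔ D i m ≠ 0 := by
    rcases hε m with e | e <;> simp [e]
  apply sum_eq_zero_of_oriented
  · intro m _
    rcases hD.1 i m with d | d | d <;> rcases hε m with e | e <;> simp [d, e]
  · simpa only [filter_filter] using (hor i).1
  · simpa only [filter_filter] using (hor i).2
  · simpa only [filter_filter, hne] using h.1 i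

/-- An orientation of a regulable component, chosen through a representative of it, so that all
columns of the component take their signs from the same orientation. -/
noncomputable def componentSigns (D : Matrix (Fin k) (Fin l) ℝ)
    (c : (columnGraph D).ConnectedComponent) : Fin l → ℝ :=
  if h : RegulableComp D c.out then h.2.choose else fun _ => 1

noncomputable def orientingSigns (D : Matrix (Fin k) (Fin l) ℝ) (j : Fin l) : ℝ :=
  componentSigns D ((columnGraph D).connectedComponentMk j) j

theorem orientingSigns_eq_one_or_neg_one (D : Matrix (Fin k) (Fin l) ℝ) (j : Fin l) :
    orientingSigns D j = 1 ∨ orientingSigns D j = -1 := by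
  rw [orientingSigns, componentSigns]
  split_ifs with h
  · exact h.2.choose_spec.1 j
  · exact Or.inl rfl

theorem orients_orientingSigns {j : Fin l} (h : RegulableComp D j) :
    Orients D (orientingSigns D) j := by
  set j₀ := ((columnGraph D).connectedComponentMk j).out
  have hj₀ : (columnGraph D).Reachable j₀ j :=
    SimpleGraph.ConnectedComponent.eq.mp (Quot.out_eq _)
  have h₀ : RegulableComp D j₀ := (regulableComp_congr hj₀).mpr h
  refine (orients_congr hj₀ fun m hm => ?_).mp h₀.2.choose_spec.2
  rw [orientingSigns, SimpleGraph.ConnectedComponent.eq.mpr (hj₀.symm.trans hm).symm,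
    componentSigns, dif_pos h₀]

def IsRegulableMax (D : Matrix (Fin k) (Fin l) ℝ) (j : Fin l) : Prop :=
  RegulableComp D j ∧ ∀ j', (columnGraph D).Reachable j j' → j' ≤ j

theorem exists_isRegulableMax {j : Fin l} (h : RegulableComp D j) :
    ∃ t, (columnGraph D).Reachable j t ∧ IsRegulableMax D t := by
  obtain ⟨t, ht, hmax⟩ := (univ.filter fun m => (columnGraph D).Reachable j m).exists_max_image
    id ⟨j, by simp⟩
  rw [mem_filter] at ht
  exact ⟨t, ht.2, (regulableComp_congr ht.2).mp h,
    fun j' hj' => hmax j' (by simpa using ht.2.trans hj')⟩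

theorem IsRegulableMax.eq_of_reachable {j j' : Fin l} (h : IsRegulableMax D j)
    (h' : IsRegulableMax D j') (hjj' : (columnGraph D).Reachable j j') : j = j' :=
  le_antisymm (h'.2 j hjj'.symm) (h.2 j' hjj')

theorem one_lt_card_filter_reachable (hcols : ∀ j, col D j ≠ 0) {j : Fin l}
    (h : RegulableComp D j) : 1 < #(univ.filter fun m => (columnGraph D).Reachable j m) := by
  obtain ⟨i, hi⟩ : ∃ i, D i j ≠ 0 := by simpa [funext_iff, col] using hcols j
  have hpos : 0 < #(univ.filter fun m => (columnGraph D).Reachable j m ∧ D i m ≠ 0) :=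
    card_pos.mpr ⟨j, by simp [hi]⟩
  calc 1 < #(univ.filter fun m => (columnGraph D).Reachable j m ∧ D i m ≠ 0) := by
        have := h.1 i; omega
    _ ≤ _ := card_le_card fun m hm => by simp_all

/-- The matrix `U` of the statement. -/
noncomputable def reductionMatrix (D : Matrix (Fin k) (Fin l) ℝ) : Matrix (Fin l) (Fin l) ℝ :=
  Matrix.of fun j j' => if j = j' ∨ (RegulableComp D j ∧ (columnGraph D).Reachable j j' ∧
    ∀ j'' : Fin l, (columnGraph D).Reachable j j'' → j'' ≤ j') then 1 else 0

theorem reductionMatrix_apply (m j : Fin l) :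
    reductionMatrix D m j =
      if m = j ∨ (IsRegulableMax D j ∧ (columnGraph D).Reachable j m) then 1 else 0 := by
  refine if_congr (or_congr_right ⟨fun ⟨hreg, hr, hmax⟩ => ?_,
    fun ⟨⟨hreg, hmax⟩, hr⟩ => ?_⟩) rfl rfl
  · exact ⟨⟨(regulableComp_congr hr).mp hreg, fun j' hj' => hmax j' (hr.trans hj')⟩,
      hr.symm⟩
  · exact ⟨(regulableComp_congr hr).mp hreg, hr.symm, fun j' hj' => hmax j' (hr.trans hj')⟩

section Reduction

variable {ε : Fin l → ℝ}

theorem diagonal_mul_reductionMatrix_apply (m j : Fin l) :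
    (Matrix.diagonal ε * reductionMatrix D) m j =
      if m = j ∨ (IsRegulableMax D j ∧ (columnGraph D).Reachable j m) then ε m else 0 := by
  rw [Matrix.diagonal_mul, reductionMatrix_apply]
  split_ifs <;> simp

theorem mul_diagonal_mul_reductionMatrix_apply (i : Fin k) (j : Fin l) :
    (D * (Matrix.diagonal ε * reductionMatrix D)) i j =
      if IsRegulableMax D j then ∑ m ∈ univ.filter (fun m => (columnGraph D).Reachable j m),
        D i m * ε m else D i j * ε j := by
  rw [Matrix.mul_apply]
  simp only [diagonal_mul_reductionMatrix_apply]
  split_ifs with ht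
  · rw [sum_filter]
    refine sum_congr rfl fun m _ => ?_
    obtain rfl | hne := eq_or_ne m j
    · simp
    · simp [ht, hne]
  · simp [ht]

theorem filter_diagonal_mul_reductionMatrix_ne_zero (hε : ∀ m, ε m ≠ 0) (j : Fin l) :
    univ.filter (fun m => (Matrix.diagonal ε * reductionMatrix D) m j ≠ 0) =
      univ.filter fun m => m = j ∨ (IsRegulableMax D j ∧ (columnGraph D).Reachable j m) := by
  ext m
  rw [mem_filter, mem_filter, diagonal_mul_reductionMatrix_apply]
  split_ifs with h <;> simp [h, hε]

theorem col_mul_diagonal_mul_reductionMatrix_eq_zero_iff (hD : NonBranching D)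
    (hcols : ∀ j, col D j ≠ 0) (hε : ∀ m, ε m = 1 ∨ ε m = -1)
    (hor : ∀ j, RegulableComp D j → Orients D ε j) (j : Fin l) :
    col (D * (Matrix.diagonal ε * reductionMatrix D)) j = 0 ↔ IsRegulableMax D j := by
  refine ⟨fun hz => by_contra fun ht => hcols j (funext fun i => ?_),
    fun ht => funext fun i => ?_⟩
  · have hi := congrFun hz i
    rw [col, mul_diagonal_mul_reductionMatrix_apply, if_neg ht] at hi
    rcases hε j with e | e <;> simpa [e, col] using hi
  · rw [col, mul_diagonal_mul_reductionMatrix_apply, if_pos ht]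
    exact ht.1.sum_mul_eq_zero hD hε (hor j ht.1) i

theorem one_lt_suppCard_diagonal_mul_reductionMatrix_iff (hcols : ∀ j, col D j ≠ 0)
    (hε : ∀ m, ε m ≠ 0) (j : Fin l) :
    1 < suppCard (Matrix.diagonal ε * reductionMatrix D) j ↔ IsRegulableMax D j := by
  rw [suppCard, filter_diagonal_mul_reductionMatrix_ne_zero hε]
  by_cases ht : IsRegulableMax D j
  · simp only [ht, true_and, iff_true]
    refine (one_lt_card_filter_reachable hcols ht.1).trans_le (card_le_card fun m hm => ?_)
    simp only [mem_filter, mem_univ, true_and] at hm ⊢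
    exact Or.inr hm
  · simp [ht, filter_eq']

theorem linearIndependent_nonzero_cols_mul_diagonal_mul_reductionMatrix (hD : NonBranching D)
    (hcols : ∀ j, col D j ≠ 0) (hε : ∀ m, ε m = 1 ∨ ε m = -1)
    (hor : ∀ j, RegulableComp D j → Orients D ε j) :
    LinearIndependent ℝ
      fun j : {j // col (D * (Matrix.diagonal ε * reductionMatrix D)) j ≠ 0} =>
        col (D * (Matrix.diagonal ε * reductionMatrix D)) j.1 := by
  have hzero := col_mul_diagonal_mul_reductionMatrix_eq_zero_iff hD hcols hε hor
  have hindep : LinearIndepOn ℝ (col D)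
      {j | col (D * (Matrix.diagonal ε * reductionMatrix D)) j ≠ 0} :=
    hD.linearIndepOn_col fun j hj => by
      obtain ⟨t, hjt, ht⟩ := exists_isRegulableMax hj
      exact ⟨t, by simpa [hzero] using ht, hjt⟩
  have hunit (j : Fin l) : IsUnit (ε j) := by rcases hε j with e | e <;> simp [e]
  have hsmul : LinearIndepOn ℝ (fun j => ε j • col D j)
      {j | col (D * (Matrix.diagonal ε * reductionMatrix D)) j ≠ 0} :=
    hindep.units_smul fun j => (hunit j).unit
  refine hsmul.congr fun j hj => funext fun i => ?_
  have ht : ¬ IsRegulableMax D j := (hzero j).not.mp hj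
  simp [col, mul_diagonal_mul_reductionMatrix_apply, ht, mul_comm]

end Reduction

theorem weakColumnReduction_diagonal_mul_reductionMatrix {ε : Fin l → ℝ} (hD : NonBranching D)
    (hcols : ∀ j, col D j ≠ 0) (hε : ∀ m, ε m = 1 ∨ ε m = -1)
    (hor : ∀ j, RegulableComp D j → Orients D ε j) :
    WeakColumnReduction D (D * (Matrix.diagonal ε * reductionMatrix D))
      (Matrix.diagonal ε * reductionMatrix D) := by
  have hε0 (m : Fin l) : ε m ≠ 0 := by rcases hε m with e | e <;> simp [e]
  have hsupp := one_lt_suppCard_diagonal_mul_reductionMatrix_iff (D := D) hcols hε0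
  have hreach {j m : Fin l}
      (hm : m = j ∨ (IsRegulableMax D j ∧ (columnGraph D).Reachable j m)) :
      (columnGraph D).Reachable j m :=
    hm.elim (fun h => h ▸ .refl _) And.right
  refine ⟨rfl, fun m j hjm => ?_, fun m j => ?_, fun m => ?_,
    linearIndependent_nonzero_cols_mul_diagonal_mul_reductionMatrix hD hcols hε hor,
    fun j₁ j₂ hne h₁ h₂ => ?_,
    fun j => (hsupp j).trans
      (col_mul_diagonal_mul_reductionMatrix_eq_zero_iff hD hcols hε hor j).symm⟩
  · rw [diagonal_mul_reductionMatrix_apply, if_neg]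
    rintro (rfl | ⟨ht, hr⟩)
    · exact lt_irrefl _ hjm
    · exact (ht.2 m hr).not_gt hjm
  · rw [diagonal_mul_reductionMatrix_apply]
    split_ifs
    · rcases hε m with e | e <;> simp [e]
    · simp
  · rw [diagonal_mul_reductionMatrix_apply, if_pos (Or.inl rfl)]
    exact (hε m).symm
  · simp only [filter_diagonal_mul_reductionMatrix_ne_zero hε0, disjoint_filter]
    intro m _ hm₁ hm₂
    exact hne (((hsupp j₁).mp h₁).eq_of_reachable ((hsupp j₂).mp h₂)
      ((hreach hm₁).trans (hreach hm₂).symm))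

/-- For a non-branching matrix `D` with no zero columns there is a diagonal
sign matrix `E` orienting each regulable component, such that with `U` the upper-triangular
matrix with `1`s on the diagonal and `U j m = 1` whenever `m` is the largest column of the
(regulable) component of `j`, the factorization `R = D * (E * U)` is a weak column reduction
of `D`; moreover the `j`-th column of `R` is zero iff `j` is the largest column index of a
regulable component. -/
theorem stmt8 {k l : ℕ} (D : Matrix (Fin k) (Fin l) ℝ)
    (hD : NonBranching D) (hcols : ∀ j, col D j ≠ 0)
    (U : Matrix (Fin l) (Fin l) ℝ)
    (hU : ∀ j j' : Fin l, U j j' =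
      if j = j' ∨ (RegulableComp D j ∧ (columnGraph D).Reachable j j' ∧
          ∀ j'' : Fin l, (columnGraph D).Reachable j j'' → j'' ≤ j') then 1 else 0) :
    ∃ ε : Fin l → ℝ, (∀ j, ε j = 1 ∨ ε j = -1) ∧
      (∀ j : Fin l, RegulableComp D j → ∀ i : Fin k,
        (Finset.univ.filter fun j' => (columnGraph D).Reachable j j' ∧
          (D * Matrix.diagonal ε) i j' = 1).card ≤ 1 ∧
        (Finset.univ.filter fun j' => (columnGraph D).Reachable j j' ∧
          (D * Matrix.diagonal ε) i j' = -1).card ≤ 1) ∧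
      WeakColumnReduction D (D * (Matrix.diagonal ε * U)) (Matrix.diagonal ε * U) ∧
      (∀ j : Fin l, col (D * (Matrix.diagonal ε * U)) j = 0 ↔
        (RegulableComp D j ∧ ∀ j' : Fin l, (columnGraph D).Reachable j j' → j' ≤ j)) := by
  obtain rfl : U = reductionMatrix D := Matrix.ext hU
  have hε := orientingSigns_eq_one_or_neg_one D
  have hor : ∀ j, RegulableComp D j → Orients D (orientingSigns D) j :=
    fun _ => orients_orientingSigns
  refine ⟨orientingSigns D, hε, fun j hj i => ?_,
    weakColumnReduction_diagonal_mul_reductionMatrix hD hcols hε hor,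
    col_mul_diagonal_mul_reductionMatrix_eq_zero_iff hD hcols hε hor⟩
  simpa only [Matrix.mul_diagonal] using hor j hj i
end
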